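/- Let n ≥ 3 be an integer and let a be a real number with 0 ≤ a ≤ (n−2)/(4(n−1)). Let (X, μ) be a measure space and let R : X → ℝ be measurable with r₀ ≤ R(x) ≤ r₁ for μ-a.e. x, where the real numbers r₀ ≤ r₁ satisfy r₀ ≥ ((n−2)/n)·r₁ ≥ 0. Let h, f : X → ℝ be measurable functions such that h, R·h, f², and R·f² are μ-integrable, h ≥ 0 μ-a.e., and ∫_X f² dμ = 1. Set λ := ∫_X h dμ. Then (2(n−1)a − (n−2)/2)·∫_X R·h dμ − (2(n−1)a − n/2)·λ·∫_X R·f² dμ ≥ λ·((n/2)·r₀ − ((n−2)/2)·r₁) ≥ 0. -/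

import Mathlib

/-!
Write `c = 2(n-1)a - (n-2)/2`, so that the two coefficients are `c ≤ 0` and `c - 1 < 0`.
Bounding `∫ R h ≤ r₁ λ` and `∫ R f² ≥ r₀` (the latter because `f²` is a probability density)
gives the lower bound `λ (c r₁ - (c - 1) r₀) = λ (n/2 r₀ - (n-2)/2 r₁) + 2(n-1)a λ (r₁ - r₀)`,
and the last term is nonnegative.
-/

open MeasureTheory

section WeightedBounds

variable {X : Type*} [MeasurableSpace X] {μ : Measure X} {R g : X → ℝ} {r : ℝ}

theorem integral_mul_le_mul_integral_of_ae_le (hR : ∀ᵐ x ∂μ, R x ≤ r)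
    (hg : ∀ᵐ x ∂μ, 0 ≤ g x) (hRg : Integrable (fun x => R x * g x) μ) (hg_int : Integrable g μ) :
    ∫ x, R x * g x ∂μ ≤ r * ∫ x, g x ∂μ := by
  rw [← integral_const_mul]
  refine integral_mono_ae hRg (hg_int.const_mul r) ?_
  filter_upwards [hR, hg] with x hRx hgx
  exact mul_le_mul_of_nonneg_right hRx hgx

theorem mul_integral_le_integral_mul_of_ae_le (hR : ∀ᵐ x ∂μ, r ≤ R x)
    (hg : ∀ᵐ x ∂μ, 0 ≤ g x) (hRg : Integrable (fun x => R x * g x) μ) (hg_int : Integrable g μ) :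
    r * ∫ x, g x ∂μ ≤ ∫ x, R x * g x ∂μ := by
  rw [← integral_const_mul]
  refine integral_mono_ae (hg_int.const_mul r) hRg ?_
  filter_upwards [hR, hg] with x hRx hgx
  exact mul_le_mul_of_nonneg_right hRx hgx

end WeightedBounds

theorem yamabe_coeff_combination_ge {n a r₀ r₁ L I₁ I₂ : ℝ} (hn : 1 < n) (ha0 : 0 ≤ a)
    (ha1 : a ≤ (n - 2) / (4 * (n - 1))) (hr01 : r₀ ≤ r₁) (hL : 0 ≤ L)
    (hI₁ : I₁ ≤ r₁ * L) (hI₂ : r₀ ≤ I₂) :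
    (2 * (n - 1) * a - (n - 2) / 2) * I₁ - (2 * (n - 1) * a - n / 2) * L * I₂
      ≥ L * (n / 2 * r₀ - (n - 2) / 2 * r₁) := by
  have hc : 2 * (n - 1) * a - (n - 2) / 2 ≤ 0 := by
    rw [le_div_iff₀ (by linarith)] at ha1
    linarith
  have h₁ : (2 * (n - 1) * a - (n - 2) / 2) * (r₁ * L)
      ≤ (2 * (n - 1) * a - (n - 2) / 2) * I₁ :=
    mul_le_mul_of_nonpos_left hI₁ hc
  have h₂ : -(2 * (n - 1) * a - n / 2) * L * r₀ ≤ -(2 * (n - 1) * a - n / 2) * L * I₂ :=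
    mul_le_mul_of_nonneg_left hI₂ (mul_nonneg (by linarith) hL)
  have h₃ : 0 ≤ 2 * (n - 1) * a * (r₁ - r₀) * L :=
    mul_nonneg (mul_nonneg (mul_nonneg (by linarith) ha0) (by linarith)) hL
  linarith

theorem stmt_6_general (n : ℕ) (hn : 3 ≤ n) (a : ℝ)
    (ha0 : 0 ≤ a) (ha1 : a ≤ ((n : ℝ) - 2) / (4 * ((n : ℝ) - 1)))
    {X : Type*} [MeasurableSpace X] (μ : Measure X)
    (R h f : X → ℝ)
    (r₀ r₁ : ℝ) (hr01 : r₀ ≤ r₁)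
    (hbound : ∀ᵐ x ∂μ, r₀ ≤ R x ∧ R x ≤ r₁)
    (hcond1 : (((n : ℝ) - 2) / n) * r₁ ≤ r₀)
    (hh_int : Integrable h μ)
    (hRh_int : Integrable (fun x => R x * h x) μ)
    (hf2_int : Integrable (fun x => (f x) ^ 2) μ)
    (hRf2_int : Integrable (fun x => R x * (f x) ^ 2) μ)
    (hh_nonneg : ∀ᵐ x ∂μ, 0 ≤ h x)
    (hf2_norm : ∫ x, (f x) ^ 2 ∂μ = 1) :
    (2 * ((n : ℝ) - 1) * a - ((n : ℝ) - 2) / 2) * ∫ x, R x * h x ∂μ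
        - (2 * ((n : ℝ) - 1) * a - (n : ℝ) / 2) * (∫ x, h x ∂μ) * ∫ x, R x * (f x) ^ 2 ∂μ
      ≥ (∫ x, h x ∂μ) * (((n : ℝ) / 2) * r₀ - (((n : ℝ) - 2) / 2) * r₁)
    ∧ (∫ x, h x ∂μ) * (((n : ℝ) / 2) * r₀ - (((n : ℝ) - 2) / 2) * r₁) ≥ 0 := by
  have hn' : (3 : ℝ) ≤ n := by exact_mod_cast hn
  have hL : 0 ≤ ∫ x, h x ∂μ := integral_nonneg_of_ae hh_nonneg
  have hI₁ : ∫ x, R x * h x ∂μ ≤ r₁ * ∫ x, h x ∂μ :=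
    integral_mul_le_mul_integral_of_ae_le (hbound.mono fun _ hx => hx.2) hh_nonneg hRh_int hh_int
  have hI₂ : r₀ ≤ ∫ x, R x * (f x) ^ 2 ∂μ := by
    simpa [hf2_norm] using mul_integral_le_integral_mul_of_ae_le (hbound.mono fun _ hx => hx.1)
      (ae_of_all μ fun x => sq_nonneg (f x)) hRf2_int hf2_int
  have hgap : 0 ≤ (n : ℝ) / 2 * r₀ - ((n : ℝ) - 2) / 2 * r₁ := by
    rw [div_mul_eq_mul_div, div_le_iff₀ (by linarith)] at hcond1
    linarith
  exact ⟨yamabe_coeff_combination_ge (by linarith) ha0 ha1 hr01 hL hI₁ hI₂, mul_nonneg hL hgap⟩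

/-- Proposition 3.2 of the paper: the eigenvalue-monotonicity estimate along the
unnormalized Yamabe flow for `0 ≤ a ≤ (n−2)/(4(n−1))` when
`min R ≥ ((n−2)/n)·max R ≥ 0`. -/
theorem stmt_6 (n : ℕ) (hn : 3 ≤ n) (a : ℝ)
    (ha0 : 0 ≤ a) (ha1 : a ≤ ((n : ℝ) - 2) / (4 * ((n : ℝ) - 1)))
    {X : Type*} [MeasurableSpace X] (μ : Measure X)
    (R h f : X → ℝ) (hRmeas : Measurable R) (hhmeas : Measurable h)
    (hfmeas : Measurable f)
    (r₀ r₁ : ℝ) (hr01 : r₀ ≤ r₁)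
    (hbound : ∀ᵐ x ∂μ, r₀ ≤ R x ∧ R x ≤ r₁)
    (hcond1 : (((n : ℝ) - 2) / n) * r₁ ≤ r₀)
    (hcond2 : 0 ≤ (((n : ℝ) - 2) / n) * r₁)
    (hh_int : Integrable h μ)
    (hRh_int : Integrable (fun x => R x * h x) μ)
    (hf2_int : Integrable (fun x => (f x) ^ 2) μ)
    (hRf2_int : Integrable (fun x => R x * (f x) ^ 2) μ)
    (hh_nonneg : ∀ᵐ x ∂μ, 0 ≤ h x)
    (hf2_norm : ∫ x, (f x) ^ 2 ∂μ = 1) :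
    (2 * ((n : ℝ) - 1) * a - ((n : ℝ) - 2) / 2) * ∫ x, R x * h x ∂μ
        - (2 * ((n : ℝ) - 1) * a - (n : ℝ) / 2) * (∫ x, h x ∂μ) * ∫ x, R x * (f x) ^ 2 ∂μ
      ≥ (∫ x, h x ∂μ) * (((n : ℝ) / 2) * r₀ - (((n : ℝ) - 2) / 2) * r₁)
    ∧ (∫ x, h x ∂μ) * (((n : ℝ) / 2) * r₀ - (((n : ℝ) - 2) / 2) * r₁) ≥ 0 :=
  stmt_6_general n hn a ha0 ha1 μ R h f r₀ r₁ hr01 hbound hcond1 hh_int hRh_int hf2_int hRf2_int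
    hh_nonneg hf2_norm
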